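/- Let 0 < α < 2 and ū : [1,∞) → [0,∞) measurable. If there exist C > 0, β ≥ α and N ≥ 1 such that ∫_R^{2R} R^α ū(r)/(r (r²-R²)^{α/2}) dr ≥ C R^{β} for all R > N, and ∫₁^∞ ū(r)/r^{1+α} dr < ∞, then we obtain a contradiction; i.e. there is no nonnegative measurable ū with ∫₁^∞ ū(r)/r^{1+α} dr < ∞ satisfying such a lower bound with β ≥ α. -/

import Mathlib

open MeasureTheory Set ENNReal

/-!
Integrate the lower bound against `R^{-1-α}` over `R > N`: since `β ≥ α` the weighted bound is at
least `C / R`, so the double integral over the wedge `N < R < r < 2R` diverges. Integrating in `R`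
first instead, `R > r/2` and `r² - R² ≥ r (r - R)` bound the inner integral by a multiple of
`u(r) / r^{1+α}` (the singularity `(r - R)^{-α/2}` is integrable because `α < 2`), so by Tonelli
the same double integral is finite.
-/

lemma lintegral_Ioo_rpow_neg {b s : ℝ} (hb : 0 < b) (hs : s < 1) :
    ∫⁻ x in Ioo 0 b, ENNReal.ofReal (x ^ (-s)) = ENNReal.ofReal (b ^ (1 - s) / (1 - s)) := by
  have hint : IntegrableOn (fun x : ℝ => x ^ (-s)) (Ioo 0 b) :=
    (intervalIntegral.integrableOn_Ioo_rpow_iff hb).2 (by linarith)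
  have hnonneg : 0 ≤ᵐ[volume.restrict (Ioo 0 b)] fun x : ℝ => x ^ (-s) := by
    filter_upwards [ae_restrict_mem measurableSet_Ioo] with x hx using Real.rpow_nonneg hx.1.le _
  rw [← ofReal_integral_eq_lintegral_ofReal hint hnonneg, ← integral_Ioc_eq_integral_Ioo,
    ← intervalIntegral.integral_of_le hb.le, integral_rpow (Or.inl (by linarith)),
    Real.zero_rpow (by linarith), neg_add_eq_sub, sub_zero]

lemma lintegral_Ioo_sub_rpow_neg {a b s : ℝ} (hab : a < b) (hs : s < 1) :
    ∫⁻ x in Ioo a b, ENNReal.ofReal ((b - x) ^ (-s)) =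
      ENNReal.ofReal ((b - a) ^ (1 - s) / (1 - s)) := by
  have hpre : (fun x : ℝ => b - x) ⁻¹' Ioo 0 (b - a) = Ioo a b := by
    ext x
    simp only [mem_preimage, mem_Ioo]
    constructor <;> rintro ⟨h₁, h₂⟩ <;> constructor <;> linarith
  rw [← hpre, (Measure.measurePreserving_sub_left volume b).setLIntegral_comp_preimage_emb
    (Homeomorph.subLeft b).measurableEmbedding (fun x => ENNReal.ofReal (x ^ (-s))),
    lintegral_Ioo_rpow_neg (by linarith) hs]

lemma lintegral_Ioi_inv_eq_top {a : ℝ} (ha : 0 < a) :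
    ∫⁻ x in Ioi a, ENNReal.ofReal x⁻¹ = ⊤ := by
  by_contra h
  have hnonneg : 0 ≤ᵐ[volume.restrict (Ioi a)] fun x : ℝ => x⁻¹ := by
    filter_upwards [ae_restrict_mem measurableSet_Ioi] with x hx using inv_nonneg.2 (ha.trans hx).le
  exact not_integrableOn_Ioi_inv
    ((lintegral_ofReal_ne_top_iff_integrable measurable_inv.aestronglyMeasurable hnonneg).1 h)

lemma rpow_neg_one_sub_mul_kernel_le {α R r v : ℝ} (hα : 0 ≤ α) (hv : 0 ≤ v) (hR : 0 < R)
    (hRr : R < r) (hr : r < 2 * R) :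
    R ^ (-1 - α) * (R ^ α * v / (r * (r ^ 2 - R ^ 2) ^ (α / 2))) ≤
      2 * v * r ^ (-2 - α / 2) * (r - R) ^ (-(α / 2)) := by
  have hr0 : 0 < r := hR.trans hRr
  have hrR : 0 < r - R := by linarith
  have hlhs : R ^ (-1 - α) * (R ^ α * v / (r * (r ^ 2 - R ^ 2) ^ (α / 2))) =
      v / (R * r * (r ^ 2 - R ^ 2) ^ (α / 2)) := by
    rw [mul_div_assoc', ← mul_assoc, ← Real.rpow_add hR, sub_add_cancel, Real.rpow_neg_one,
      inv_mul_eq_div, div_div, mul_assoc]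
  have hrhs : 2 * v * r ^ (-2 - α / 2) * (r - R) ^ (-(α / 2)) =
      v / (r / 2 * r * (r * (r - R)) ^ (α / 2)) := by
    rw [show -2 - α / 2 = -(2 + α / 2) by ring, Real.rpow_neg hr0.le, Real.rpow_neg hrR.le,
      Real.rpow_add hr0, Real.mul_rpow hr0.le hrR.le, Real.rpow_two]
    field_simp
  rw [hlhs, hrhs]
  gcongr
  · linarith
  · nlinarith

def wedge (N : ℝ) : Set (ℝ × ℝ) := {p | N < p.1 ∧ p.1 < p.2 ∧ p.2 < 2 * p.1}

lemma measurableSet_wedge (N : ℝ) : MeasurableSet (wedge N) :=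
  (measurableSet_lt measurable_const measurable_fst).inter
    ((measurableSet_lt measurable_fst measurable_snd).inter
      (measurableSet_lt measurable_snd (measurable_fst.const_mul 2)))

noncomputable def weightedKernel (α N : ℝ) (u : ℝ → ℝ) : ℝ × ℝ → ℝ≥0∞ :=
  (wedge N).indicator fun p => ENNReal.ofReal
    (p.1 ^ (-1 - α) * (p.1 ^ α * u p.2 / (p.2 * (p.2 ^ 2 - p.1 ^ 2) ^ (α / 2))))

section weightedKernel

variable {α N : ℝ} {u : ℝ → ℝ}

lemma measurable_weightedKernel (hu : Measurable u) : Measurable (weightedKernel α N u) :=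
  Measurable.indicator (by fun_prop) (measurableSet_wedge N)

lemma lintegral_weightedKernel_fst (hN : 0 ≤ N) {R : ℝ} (hR : N < R) :
    ∫⁻ r, weightedKernel α N u (R, r) = ENNReal.ofReal (R ^ (-1 - α)) *
      ∫⁻ r in Ioo R (2 * R), ENNReal.ofReal (R ^ α * u r / (r * (r ^ 2 - R ^ 2) ^ (α / 2))) := by
  have hslice : (fun r => weightedKernel α N u (R, r)) = (Ioo R (2 * R)).indicator fun r =>
      ENNReal.ofReal (R ^ (-1 - α)) *
        ENNReal.ofReal (R ^ α * u r / (r * (r ^ 2 - R ^ 2) ^ (α / 2))) := by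
    ext r
    simp only [weightedKernel, wedge, indicator_apply, mem_ofPred_eq, mem_Ioo, hR, true_and]
    split_ifs
    · exact ENNReal.ofReal_mul (Real.rpow_nonneg (hN.trans hR.le) _)
    · rfl
  rw [hslice, lintegral_indicator measurableSet_Ioo, lintegral_const_mul' _ _ ofReal_ne_top]

lemma lintegral_weightedKernel_snd_le (hα0 : 0 ≤ α) (hα2 : α < 2)
    (hu : ∀ r, N < r → 0 ≤ u r) (hN : 0 ≤ N) (r : ℝ) :
    ∫⁻ R, weightedKernel α N u (R, r) ≤ (Ioi N).indicator
      (fun r => ENNReal.ofReal (2 ^ (α / 2) / (1 - α / 2) * (u r / r ^ (1 + α)))) r := by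
  by_cases hr : N < r
  swap
  · have hzero : ∀ R, weightedKernel α N u (R, r) = 0 := fun R =>
      indicator_of_notMem (fun h => hr (h.1.trans h.2.1)) _
    simp [hzero]
  have hr0 : 0 < r := hN.trans_lt hr
  have hur := hu r hr
  have hpt : ∀ R, weightedKernel α N u (R, r) ≤ (Ioo (r / 2) r).indicator
      (fun R => ENNReal.ofReal (2 * u r * r ^ (-2 - α / 2) * (r - R) ^ (-(α / 2)))) R := by
    intro R
    by_cases hmem : (R, r) ∈ wedge N
    · rw [weightedKernel, indicator_of_mem hmem]
      obtain ⟨hNR, hRr, hr2R⟩ : N < R ∧ R < r ∧ r < 2 * R := hmem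
      rw [indicator_of_mem (show R ∈ Ioo (r / 2) r from ⟨by linarith, hRr⟩)]
      exact ENNReal.ofReal_le_ofReal
        (rpow_neg_one_sub_mul_kernel_le hα0 hur (hN.trans_lt hNR) hRr hr2R)
    · rw [weightedKernel, indicator_of_notMem hmem]
      exact zero_le
  have hconst : 0 ≤ 2 * u r * r ^ (-2 - α / 2) := by positivity
  calc ∫⁻ R, weightedKernel α N u (R, r)
      ≤ ∫⁻ R in Ioo (r / 2) r,
          ENNReal.ofReal (2 * u r * r ^ (-2 - α / 2)) * ENNReal.ofReal ((r - R) ^ (-(α / 2))) := by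
        simp_rw [← ENNReal.ofReal_mul hconst, ← lintegral_indicator measurableSet_Ioo]
        exact lintegral_mono hpt
    _ = ENNReal.ofReal (2 * u r * r ^ (-2 - α / 2) * ((r / 2) ^ (1 - α / 2) / (1 - α / 2))) := by
        rw [lintegral_const_mul' _ _ ofReal_ne_top,
          lintegral_Ioo_sub_rpow_neg (by linarith) (by linarith), ← ENNReal.ofReal_mul hconst,
          _root_.sub_half]
    _ = _ := by
        rw [indicator_of_mem (mem_Ioi.2 hr)]
        congr 1
        rw [Real.div_rpow hr0.le zero_le_two, Real.rpow_sub zero_lt_two, Real.rpow_one,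
          show -2 - α / 2 = -(1 - α / 2) - (1 + α) by ring, Real.rpow_sub hr0,
          Real.rpow_neg hr0.le]
        field_simp

lemma ofReal_mul_inv_le_lintegral_weightedKernel {β C R : ℝ} (hN : 1 ≤ N) (hαβ : α ≤ β)
    (hC : 0 ≤ C) (hR : N < R)
    (hlow : ENNReal.ofReal (C * R ^ β) ≤
      ∫⁻ r in Ioo R (2 * R), ENNReal.ofReal (R ^ α * u r / (r * (r ^ 2 - R ^ 2) ^ (α / 2)))) :
    ENNReal.ofReal C * ENNReal.ofReal R⁻¹ ≤ ∫⁻ r, weightedKernel α N u (R, r) := by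
  have hR1 : 1 ≤ R := hN.trans hR.le
  have hR0 : 0 < R := zero_lt_one.trans_le hR1
  have hinv : R⁻¹ ≤ R ^ (-1 - α) * R ^ β := by
    rw [← Real.rpow_add hR0, ← Real.rpow_neg_one]
    exact Real.rpow_le_rpow_of_exponent_le hR1 (by linarith)
  rw [lintegral_weightedKernel_fst (zero_le_one.trans hN) hR]
  calc ENNReal.ofReal C * ENNReal.ofReal R⁻¹
      ≤ ENNReal.ofReal (R ^ (-1 - α)) * ENNReal.ofReal (C * R ^ β) := by
        rw [← ENNReal.ofReal_mul hC, ← ENNReal.ofReal_mul (by positivity)]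
        refine ENNReal.ofReal_le_ofReal ?_
        calc C * R⁻¹ ≤ C * (R ^ (-1 - α) * R ^ β) := by gcongr
          _ = R ^ (-1 - α) * (C * R ^ β) := by ring
    _ ≤ _ := by gcongr

lemma lintegral_lintegral_weightedKernel_eq_top {β C : ℝ} (hαβ : α ≤ β) (hC : 0 < C)
    (hN : 1 ≤ N)
    (hlow : ∀ R : ℝ, N < R → ENNReal.ofReal (C * R ^ β) ≤
      ∫⁻ r in Ioo R (2 * R), ENNReal.ofReal (R ^ α * u r / (r * (r ^ 2 - R ^ 2) ^ (α / 2)))) :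
    ∫⁻ R, ∫⁻ r, weightedKernel α N u (R, r) = ⊤ := by
  refine eq_top_iff.2 ?_
  calc ⊤ = ∫⁻ R in Ioi N, ENNReal.ofReal C * ENNReal.ofReal R⁻¹ := by
        rw [lintegral_const_mul' _ _ ofReal_ne_top, lintegral_Ioi_inv_eq_top (by linarith),
          ENNReal.mul_top (ENNReal.ofReal_pos.2 hC).ne']
    _ ≤ ∫⁻ R in Ioi N, ∫⁻ r, weightedKernel α N u (R, r) :=
        setLIntegral_mono' measurableSet_Ioi fun R hR =>
          ofReal_mul_inv_le_lintegral_weightedKernel hN hαβ hC.le hR (hlow R hR)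
    _ ≤ ∫⁻ R, ∫⁻ r, weightedKernel α N u (R, r) := setLIntegral_le_lintegral _ _

lemma lintegral_lintegral_weightedKernel_swap_lt_top (hα0 : 0 ≤ α) (hα2 : α < 2) (hN : 1 ≤ N)
    (hu : ∀ r, 1 ≤ r → 0 ≤ u r)
    (hfin : ∫⁻ r in Ioi 1, ENNReal.ofReal (u r / r ^ (1 + α)) < ⊤) :
    ∫⁻ r, ∫⁻ R, weightedKernel α N u (R, r) < ⊤ := by
  set c := 2 ^ (α / 2) / (1 - α / 2)
  have hc : 0 ≤ c := div_nonneg (by positivity) (by linarith)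
  calc ∫⁻ r, ∫⁻ R, weightedKernel α N u (R, r)
      ≤ ∫⁻ r, (Ioi N).indicator (fun r => ENNReal.ofReal (c * (u r / r ^ (1 + α)))) r :=
        lintegral_mono <| lintegral_weightedKernel_snd_le hα0 hα2
          (fun r hr => hu r (hN.trans hr.le)) (by linarith)
    _ ≤ ∫⁻ r in Ioi 1, ENNReal.ofReal (c * (u r / r ^ (1 + α))) := by
        rw [lintegral_indicator measurableSet_Ioi]
        exact lintegral_mono_set (Ioi_subset_Ioi hN)
    _ = ENNReal.ofReal c * ∫⁻ r in Ioi 1, ENNReal.ofReal (u r / r ^ (1 + α)) := by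
        simp_rw [ENNReal.ofReal_mul hc]
        exact lintegral_const_mul' _ _ ofReal_ne_top
    _ < ⊤ := ENNReal.mul_lt_top ofReal_lt_top hfin

end weightedKernel

theorem stmt_5 (α β : ℝ) (hα0 : 0 < α) (hα2 : α < 2) (hβ : α ≤ β)
    (u : ℝ → ℝ) (hmeas : Measurable u) (hnonneg : ∀ r, 1 ≤ r → 0 ≤ u r)
    (C N : ℝ) (hC : 0 < C) (hN : 1 ≤ N)
    (hlow : ∀ R : ℝ, N < R →
      ENNReal.ofReal (C * R ^ β) ≤
        ∫⁻ r in Ioo R (2 * R),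
          ENNReal.ofReal (R ^ α * u r / (r * (r ^ 2 - R ^ 2) ^ (α / 2))))
    (hfin : (∫⁻ r in Ioi (1:ℝ), ENNReal.ofReal (u r / r ^ (1 + α))) < ⊤) :
    False := by
  have h_top := lintegral_lintegral_weightedKernel_eq_top (u := u) hβ hC hN hlow
  rw [lintegral_lintegral_swap (f := fun R r => weightedKernel α N u (R, r))
    (measurable_weightedKernel hmeas).aemeasurable] at h_top
  exact (lintegral_lintegral_weightedKernel_swap_lt_top hα0.le hα2 hN hnonneg hfin).ne h_top
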